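/- arXiv:0809.1552 — 9 statements merged into one kernel-verified Lean document; each statement's English description precedes it below -/
import Mathlib

section
/- For every type X, every rational step function f : S X and every rational a with 0 < a < 1, gluing the left and right splits back at a yields a step function equivalent to f: glue a (splitL f a) (splitR f a) ≍ f, where ≍ is the lifted equality relation on S X. -/
set_option linter.unusedVariables false

/-- Rationals strictly between 0 and 1. -/
abbrev OO : Type := {q : ℚ // 0 < q ∧ q < 1}

/-- Rational step functions on the unit interval with values in `X`. -/
inductive S (X : Type) : Type
  | const : X → S X
  | glue : OO → S X → S X → S X

namespace S

def divO (a o : OO) (h : a.1 < o.1) : OO :=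
  ⟨a.1 / o.1, div_pos a.2.1 o.2.1, (div_lt_one o.2.1).2 h⟩

def subO (a o : OO) (h : o.1 < a.1) : OO :=
  ⟨(a.1 - o.1) / (1 - o.1),
    div_pos (by linarith) (by linarith [o.2.2]),
    (div_lt_one (by linarith [o.2.2])).2 (by linarith [a.2.2])⟩

/-- Left split: the part of the step function on `[0,a]`, rescaled to `[0,1]`. -/
def splitL {X : Type} : S X → OO → S X
  | const x, _ => const x
  | glue o f g, a =>
      if h : a.1 < o.1 then splitL f (divO a o h)
      else if h' : o.1 < a.1 then glue (divO o a h') f (splitL g (subO a o h'))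
      else f

/-- Right split: the part of the step function on `[a,1]`, rescaled to `[0,1]`. -/
def splitR {X : Type} : S X → OO → S X
  | const x, _ => const x
  | glue o f g, a =>
      if h : a.1 < o.1 then glue (subO o a h) (splitR f (divO a o h)) g
      else if h' : o.1 < a.1 then splitR g (subO a o h')
      else g

/-- The catamorphism (fold) for step functions. -/
def fold {X Y : Type} (φ : X → Y) (ψ : OO → Y → Y → Y) : S X → Y
  | const x => φ x
  | glue o f g => ψ o (fold φ ψ f) (fold φ ψ g)

/-- `map` for step functions. -/
def mapS {X Y : Type} (f : X → Y) : S X → S Y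
  | const x => const (f x)
  | glue o l r => glue o (mapS f l) (mapS f r)

/-- The applicative `ap` (pointwise application) for step functions. -/
def ap {X Y : Type} : S (X → Y) → S X → S Y
  | const f, x => mapS f x
  | glue o fl fr, x => glue o (ap fl (splitL x o)) (ap fr (splitR x o))

/-- Binary map. -/
def map2 {X Y Z : Type} (f : X → Y → Z) (a : S X) (b : S Y) : S Z :=
  ap (mapS f a) b

/-- `fold⋆`: a step function of propositions holds everywhere. -/
def foldStar : S Prop → Prop := fold id (fun _ p q => p ∧ q)

/-- Lifting of a relation to step functions: it holds pointwise everywhere. -/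
def liftRel {X Y : Type} (R : X → Y → Prop) (f : S X) (g : S Y) : Prop :=
  foldStar (map2 R f g)

/-- The equivalence `≍` on step functions: the lifting of equality. -/
def equivS {X : Type} (f g : S X) : Prop := liftRel Eq f g

def foldSup : S ℚ → ℚ := fold id (fun _ x y => max x y)

def foldAffine : S ℚ → ℚ := fold id (fun o x y => o.1 * x + (1 - o.1) * y)

def normInf (f : S ℚ) : ℚ := foldSup (mapS (fun q => |q|) f)

def normOne (f : S ℚ) : ℚ := foldAffine (mapS (fun q => |q|) f)

def dInf (f g : S ℚ) : ℚ := normInf (map2 (· - ·) f g)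

def dOne (f g : S ℚ) : ℚ := normOne (map2 (· - ·) f g)

end S

open S


theorem equivS_refl {X : Type} (f : S X) : equivS f f := by
  induction f with
  | const x => simp [equivS, liftRel, map2, ap, mapS, foldStar, fold]
  | glue o l r hl hr =>
      simp only [equivS, liftRel, map2, ap, mapS, splitL, splitR, foldStar, fold,
        lt_irrefl, dif_neg, not_false_iff] at *
      exact ⟨hl, hr⟩

/-- Gluing the left and right splits of `f` at `a` yields a step function
equivalent to `f`. -/
theorem glue_splitL_splitR_equiv {X : Type} (f : S X) (a : OO) :
    equivS (S.glue a (splitL f a) (splitR f a)) f := by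
  exact ⟨equivS_refl _, equivS_refl _⟩
end

section
/- (Split–Split, left) For every type X, every step function f : S X and rationals a, b, c strictly between 0 and 1, if a·b = c then splitL (splitL f a) b ≍ splitL f c, where ≍ is the lifted equality relation on S X. -/
set_option linter.unusedVariables false

open S

/-! At a node `glue o f g` the cut `b` of `splitL (glue o f g) a` (for `o < a`) falls left of,
on, or right of the rescaled node `o / a` exactly when `c = a * b` falls left of, on, or right of
`o`, and the rescaled cut points again multiply to the rescaled target; so both sides follow the
same recursion and are even equal as trees. -/

namespace S

variable {X : Type}

lemma splitL_glue_of_lt {a o : OO} (f g : S X) (h : a.1 < o.1) :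
    splitL (glue o f g) a = splitL f (divO a o h) := by
  rw [splitL, dif_pos h]

lemma splitL_glue_of_gt {a o : OO} (f g : S X) (h : o.1 < a.1) :
    splitL (glue o f g) a = glue (divO o a h) f (splitL g (subO a o h)) := by
  rw [splitL, dif_neg h.not_gt, dif_pos h]

@[simp]
lemma splitL_glue_self (o : OO) (f g : S X) : splitL (glue o f g) o = f := by
  simp [splitL]

@[simp]
lemma splitR_glue_self (o : OO) (f g : S X) : splitR (glue o f g) o = g := by
  simp [splitR]

lemma liftRel_self {R : X → X → Prop} (hR : ∀ x, R x x) (f : S X) : liftRel R f f := by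
  induction f with
  | const x => exact hR x
  | glue o l r ihl ihr =>
    simp only [liftRel, map2, mapS, ap, splitL_glue_self, splitR_glue_self, foldStar, fold]
    exact ⟨ihl, ihr⟩

section CutPoints

variable {a b c o : OO}

lemma lt_divO_iff (h : a.1 * b.1 = c.1) (hoa : o.1 < a.1) :
    b.1 < (divO o a hoa).1 ↔ c.1 < o.1 := by
  rw [divO, lt_div_iff₀ a.2.1, mul_comm, h]

lemma divO_lt_iff (h : a.1 * b.1 = c.1) (hoa : o.1 < a.1) :
    (divO o a hoa).1 < b.1 ↔ o.1 < c.1 := by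
  rw [divO, div_lt_iff₀ a.2.1, mul_comm, h]

lemma divO_divO_of_lt (h : a.1 * b.1 = c.1) (hoa : o.1 < a.1)
    (hb : b.1 < (divO o a hoa).1) (hco : c.1 < o.1) :
    divO b (divO o a hoa) hb = divO c o hco := by
  ext
  simp only [divO, ← h]
  field_simp

lemma divO_divO_of_gt (h : a.1 * b.1 = c.1) (hoa : o.1 < a.1)
    (hb : (divO o a hoa).1 < b.1) (hoc : o.1 < c.1) :
    divO (divO o a hoa) b hb = divO o c hoc := by
  ext
  simp only [divO, ← h]
  field_simp

lemma subO_mul_subO (h : a.1 * b.1 = c.1) (hoa : o.1 < a.1)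
    (hb : (divO o a hoa).1 < b.1) (hoc : o.1 < c.1) :
    (subO a o hoa).1 * (subO b (divO o a hoa) hb).1 = (subO c o hoc).1 := by
  have : a.1 ≠ 0 := a.2.1.ne'
  have : (1 : ℚ) - o.1 ≠ 0 := (sub_pos.2 o.2.2).ne'
  have : a.1 - o.1 ≠ 0 := (sub_pos.2 hoa).ne'
  simp only [subO, divO, ← h]
  field_simp

end CutPoints

theorem splitL_splitL (f : S X) (a b c : OO) (h : a.1 * b.1 = c.1) :
    splitL (splitL f a) b = splitL f c := by
  induction f generalizing a b c with
  | const x => rfl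
  | glue o f g ihf ihg =>
    have ha : a.1 ≠ 0 := a.2.1.ne'
    have hca : c.1 < a.1 := h ▸ mul_lt_of_lt_one_right a.2.1 b.2.2
    rcases lt_trichotomy a.1 o.1 with hao | hao | hoa
    · rw [splitL_glue_of_lt f g hao, splitL_glue_of_lt f g (hca.trans hao)]
      exact ihf _ _ _ (by simp only [divO, div_mul_eq_mul_div, h])
    · obtain rfl : a = o := Subtype.ext hao
      rw [splitL_glue_self, splitL_glue_of_lt f g hca]
      congr 1
      ext
      simp [divO, ← h, ha]
    · rw [splitL_glue_of_gt f g hoa]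
      rcases lt_trichotomy c.1 o.1 with hco | hco | hoc
      · have hb := (lt_divO_iff h hoa).2 hco
        rw [splitL_glue_of_lt _ _ hb, splitL_glue_of_lt f g hco,
          divO_divO_of_lt h hoa hb hco]
      · obtain rfl : c = o := Subtype.ext hco
        obtain rfl : b = divO c a hoa := Subtype.ext (by simp [divO, ← h, ha])
        rw [splitL_glue_self, splitL_glue_self]
      · have hb := (divO_lt_iff h hoa).2 hoc
        rw [splitL_glue_of_gt _ _ hb, splitL_glue_of_gt f g hoc,
          divO_divO_of_gt h hoa hb hoc,
          ihg _ _ _ (subO_mul_subO h hoa hb hoc)]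

end S

/-- Split–Split, left: if `a·b = c` then `splitL (splitL f a) b ≍ splitL f c`. -/
theorem splitL_splitL_equiv {X : Type} (f : S X) (a b c : OO)
    (h : a.1 * b.1 = c.1) :
    equivS (splitL (splitL f a) b) (splitL f c) :=
  splitL_splitL f a b c h ▸ liftRel_self (fun _ => rfl) _
end

section
/- (Applicative functor laws) Step functions with pure := const and ap := @ form an applicative functor up to the equivalence ≍: for all types X, Y, Z, all v : S X, u : S (X → Y), w : S X, uu : S (Y → Z), and all f : X → Y, x : X, y : X, the following hold: (Identity) const id @ v ≍ v; (Composition) const (fun g h a => g (h a)) @ uu @ u @ w ≍ uu @ (u @ w); (Homomorphism) const f @ const x ≍ const (f x); (Interchange) u @ const y ≍ const (fun g => g y) @ u; in each case ≍ is the lifted equality relation on step functions of the appropriate value type. -/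
/-!
Read a step function as a function on `[0, 1)` through `eval`. Splitting at `a` is precomposition
with the affine bijections of `[0, 1)` onto `[0, a)` and `[a, 1)`, so `ap` is evaluated pointwise,
and `fold⋆`, hence `≍`, holds exactly when it holds at every point of `[0, 1)`. The four laws thus
reduce to the applicative laws of the reader functor `ℚ → ·`, which hold by definition.
-/

set_option linter.unusedVariables false

namespace S

variable {X Y : Type}

/-- The value at `q ∈ [0, 1)`: `glue o f g` is `f` on `[0, o)` and `g` on `[o, 1)`, both rescaled
to `[0, 1)`. -/
def eval : S X → ℚ → X
  | const x, _ => x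
  | glue o f g, q => if q < o.1 then eval f (q / o.1) else eval g ((q - o.1) / (1 - o.1))

lemma eval_glue_of_lt {o : OO} {f g : S X} {q : ℚ} (h : q < o.1) :
    eval (glue o f g) q = eval f (q / o.1) := if_pos h

lemma eval_glue_of_le {o : OO} {f g : S X} {q : ℚ} (h : o.1 ≤ q) :
    eval (glue o f g) q = eval g ((q - o.1) / (1 - o.1)) := if_neg h.not_gt

lemma div_mem_Ico {o : OO} {q : ℚ} (hq : 0 ≤ q) (h : q < o.1) : q / o.1 ∈ Set.Ico (0 : ℚ) 1 :=
  ⟨div_nonneg hq o.2.1.le, (div_lt_one o.2.1).2 h⟩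

lemma sub_div_mem_Ico {o : OO} {q : ℚ} (h : o.1 ≤ q) (hq : q < 1) :
    (q - o.1) / (1 - o.1) ∈ Set.Ico (0 : ℚ) 1 :=
  ⟨div_nonneg (sub_nonneg.2 h) (by linarith [o.2.2]),
    (div_lt_one (by linarith [o.2.2])).2 (by linarith)⟩

lemma eval_glue_mul {o : OO} {f g : S X} {q : ℚ} (hq : q ∈ Set.Ico (0 : ℚ) 1) :
    eval (glue o f g) (q * o.1) = eval f q := by
  rw [eval_glue_of_lt (by nlinarith [hq.2, o.2.1]), mul_div_cancel_right₀ _ o.2.1.ne']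

lemma eval_glue_add_mul {o : OO} {f g : S X} {q : ℚ} (hq : q ∈ Set.Ico (0 : ℚ) 1) :
    eval (glue o f g) (o.1 + q * (1 - o.1)) = eval g q := by
  rw [eval_glue_of_le (by nlinarith [hq.1, o.2.2]), add_sub_cancel_left,
    mul_div_cancel_right₀ _ (sub_pos.2 o.2.2).ne']

lemma mul_mem_Ico (o : OO) {q : ℚ} (hq : q ∈ Set.Ico (0 : ℚ) 1) :
    q * o.1 ∈ Set.Ico (0 : ℚ) 1 :=
  ⟨mul_nonneg hq.1 o.2.1.le, by nlinarith [hq.2, o.2.1, o.2.2]⟩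

lemma add_mul_mem_Ico (o : OO) {q : ℚ} (hq : q ∈ Set.Ico (0 : ℚ) 1) :
    o.1 + q * (1 - o.1) ∈ Set.Ico (0 : ℚ) 1 :=
  ⟨by nlinarith [hq.1, o.2.1, o.2.2], by nlinarith [hq.2, o.2.1, o.2.2]⟩

theorem eval_splitL (x : S X) (a : OO) {q : ℚ} (hq : q ∈ Set.Ico (0 : ℚ) 1) :
    eval (splitL x a) q = eval x (q * a.1) := by
  induction x generalizing a q with
  | const x => rfl
  | glue o f g ihf ihg =>
    obtain ⟨ho0, ho1⟩ := o.2
    obtain ⟨ha0, ha1⟩ := a.2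
    obtain ⟨hq0, hq1⟩ := hq
    rcases lt_trichotomy a.1 o.1 with h | h | h
    · rw [splitL, dif_pos h, ihf _ ⟨hq0, hq1⟩, eval_glue_of_lt (by nlinarith)]
      exact congrArg _ (mul_div_assoc _ _ _).symm
    · rw [splitL, dif_neg h.not_lt, dif_neg h.not_gt, eval_glue_of_lt (by rw [← h]; nlinarith), h,
        mul_div_cancel_right₀ _ ho0.ne']
    · rw [splitL, dif_neg h.not_gt, dif_pos h]
      by_cases hc : q < (divO o a h).1
      · have hc' : q * a.1 < o.1 := by simpa [divO, lt_div_iff₀ ha0] using hc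
        rw [eval_glue_of_lt hc, eval_glue_of_lt hc']
        congr 1
        simp only [divO]
        field_simp
      · have hc' : o.1 ≤ q * a.1 := by simpa [divO, div_le_iff₀ ha0] using hc
        rw [eval_glue_of_le (not_lt.1 hc), eval_glue_of_le hc',
          ihg _ (sub_div_mem_Ico (not_lt.1 hc) hq1)]
        congr 1
        have hao : a.1 - o.1 ≠ 0 := (sub_pos.2 h).ne'
        simp only [divO, subO]
        field_simp

theorem eval_splitR (x : S X) (a : OO) {q : ℚ} (hq : q ∈ Set.Ico (0 : ℚ) 1) :
    eval (splitR x a) q = eval x (a.1 + q * (1 - a.1)) := by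
  induction x generalizing a q with
  | const x => rfl
  | glue o f g ihf ihg =>
    obtain ⟨ho0, ho1⟩ := o.2
    obtain ⟨ha0, ha1⟩ := a.2
    obtain ⟨hq0, hq1⟩ := hq
    have ho1' : 1 - o.1 ≠ 0 := (sub_pos.2 ho1).ne'
    have ha1' : 1 - a.1 ≠ 0 := (sub_pos.2 ha1).ne'
    rcases lt_trichotomy a.1 o.1 with h | h | h
    · rw [splitR, dif_pos h]
      by_cases hc : q < (subO o a h).1
      · have hc' : a.1 + q * (1 - a.1) < o.1 := by
          simp only [subO, lt_div_iff₀ (sub_pos.2 ha1)] at hc; linarith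
        rw [eval_glue_of_lt hc, eval_glue_of_lt hc', ihf _ (div_mem_Ico hq0 hc)]
        congr 1
        simp only [divO, subO]
        field_simp
      · have hc' : o.1 ≤ a.1 + q * (1 - a.1) := by
          simp only [subO, not_lt, div_le_iff₀ (sub_pos.2 ha1)] at hc; linarith
        rw [eval_glue_of_le (not_lt.1 hc), eval_glue_of_le hc']
        congr 1
        simp only [subO]
        rw [one_sub_div ha1', sub_sub_sub_cancel_right]
        field_simp
        ring
    · rw [splitR, dif_neg h.not_lt, dif_neg h.not_gt, eval_glue_of_le (by rw [← h]; nlinarith), h,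
        add_sub_cancel_left, mul_div_cancel_right₀ _ ho1']
    · rw [splitR, dif_neg h.not_gt, dif_pos h, ihg _ ⟨hq0, hq1⟩, eval_glue_of_le (by nlinarith)]
      congr 1
      simp only [subO]
      field_simp
      ring

theorem eval_mapS (f : X → Y) (x : S X) (q : ℚ) : eval (mapS f x) q = f (eval x q) := by
  induction x generalizing q with
  | const x => rfl
  | glue o l r ihl ihr => simp only [mapS, eval, apply_ite f, ihl, ihr]

theorem eval_ap (F : S (X → Y)) (x : S X) {q : ℚ} (hq : q ∈ Set.Ico (0 : ℚ) 1) :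
    eval (ap F x) q = eval F q (eval x q) := by
  induction F generalizing x q with
  | const f => exact eval_mapS f x q
  | glue o l r ihl ihr =>
    obtain ⟨ho0, ho1⟩ := o.2
    by_cases hc : q < o.1
    · rw [ap, eval_glue_of_lt hc, eval_glue_of_lt hc, ihl _ (div_mem_Ico hq.1 hc),
        eval_splitL _ _ (div_mem_Ico hq.1 hc), div_mul_cancel₀ _ ho0.ne']
    · have hc : o.1 ≤ q := not_lt.1 hc
      rw [ap, eval_glue_of_le hc, eval_glue_of_le hc, ihr _ (sub_div_mem_Ico hc hq.2),
        eval_splitR _ _ (sub_div_mem_Ico hc hq.2),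
        div_mul_cancel₀ _ (sub_pos.2 ho1).ne', add_sub_cancel]

theorem foldStar_iff (s : S Prop) : foldStar s ↔ ∀ q ∈ Set.Ico (0 : ℚ) 1, eval s q := by
  induction s with
  | const P => exact ⟨fun h _ _ => h, fun h => h 0 ⟨le_rfl, one_pos⟩⟩
  | glue o p r ihp ihr =>
    change foldStar p ∧ foldStar r ↔ _
    rw [ihp, ihr]
    constructor
    · rintro ⟨hp, hr⟩ q hq
      by_cases hc : q < o.1
      · rw [eval_glue_of_lt hc]
        exact hp _ (div_mem_Ico hq.1 hc)
      · rw [eval_glue_of_le (not_lt.1 hc)]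
        exact hr _ (sub_div_mem_Ico (not_lt.1 hc) hq.2)
    · intro h
      exact ⟨fun q hq => eval_glue_mul hq ▸ h _ (mul_mem_Ico o hq),
        fun q hq => eval_glue_add_mul hq ▸ h _ (add_mul_mem_Ico o hq)⟩

theorem equivS_iff (f g : S X) : equivS f g ↔ ∀ q ∈ Set.Ico (0 : ℚ) 1, eval f q = eval g q := by
  rw [equivS, liftRel, map2, foldStar_iff]
  refine forall₂_congr fun q hq => ?_
  rw [eval_ap _ _ hq, eval_mapS]

end S

open S

/-- The applicative functor laws for step functions, up to the lifted equality. -/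
theorem step_applicative_laws {X Y Z : Type} (v : S X) (u : S (X → Y)) (w : S X)
    (uu : S (Y → Z)) (f : X → Y) (x y : X) :
    equivS (ap (S.const (id : X → X)) v) v ∧
    equivS
      (ap (ap (ap (S.const (fun (g : Y → Z) (h : X → Y) (a : X) => g (h a))) uu) u) w)
      (ap uu (ap u w)) ∧
    equivS (ap (S.const f) (S.const x)) (S.const (f x)) ∧
    equivS (ap u (S.const y)) (ap (S.const (fun g : X → Y => g y)) u) := by
  simp only [equivS_iff]
  refine ⟨fun q hq => ?_, fun q hq => ?_, fun q hq => ?_, fun q hq => ?_⟩ <;>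
    simp only [eval_ap _ _ hq] <;> rfl
end

section
/- (Additivity of the step-function integral) For all rational step functions f, g : S ℚ, fold_affine f + fold_affine g = fold_affine (map2 (·+·) f g). -/
set_option linter.unusedVariables false

open S

lemma fa_glue (o : OO) (f g : S ℚ) :
    foldAffine (S.glue o f g) = o.1 * foldAffine f + (1 - o.1) * foldAffine g := rfl

lemma fa_const (x : ℚ) : foldAffine (S.const x) = x := rfl

lemma fa_split (g : S ℚ) : ∀ a : OO, foldAffine g =
    a.1 * foldAffine (splitL g a) + (1 - a.1) * foldAffine (splitR g a) := by
  induction g with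
  | const x => intro a; simp only [splitL, splitR, fa_const]; ring
  | glue o f g ihf ihg =>
    intro a
    rcases lt_trichotomy a.1 o.1 with h | h | h
    · have h' : ¬ o.1 < a.1 := not_lt.2 h.le
      simp only [splitL, splitR, dif_pos h, fa_glue]
      rw [ihf (divO a o h)]
      have ho : o.1 ≠ 0 := ne_of_gt o.2.1
      have ha1 : (1:ℚ) - a.1 ≠ 0 := by have := a.2.2; intro hc; linarith
      simp only [divO, subO]
      field_simp
      ring
    · have : a = o := Subtype.ext h
      subst this
      simp only [splitL, splitR, dif_neg (lt_irrefl a.1), fa_glue]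
    · have h1 : ¬ a.1 < o.1 := not_lt.2 h.le
      simp only [splitL, splitR, dif_neg h1, dif_pos h, fa_glue]
      rw [ihg (subO a o h)]
      have ho : (1:ℚ) - o.1 ≠ 0 := by have := o.2.2; intro hc; linarith
      have ha0 : a.1 ≠ 0 := ne_of_gt a.2.1
      simp only [divO, subO]
      field_simp
      ring

lemma fa_map_add (c : ℚ) (g : S ℚ) :
    foldAffine (mapS (fun q => c + q) g) = c + foldAffine g := by
  induction g with
  | const x => rfl
  | glue o f g ihf ihg =>
    simp only [mapS, fa_glue, ihf, ihg]; ring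

/-- Additivity of the step-function integral. -/
theorem foldAffine_add (f g : S ℚ) :
    foldAffine f + foldAffine g = foldAffine (map2 (· + ·) f g) := by
  induction f generalizing g with
  | const x =>
    show x + foldAffine g = foldAffine (ap (S.const _) g)
    rw [show ap (S.const (x + ·)) g = mapS (fun q => x + q) g from rfl,
      fa_map_add]
  | glue o fl fr ihl ihr =>
    have : map2 (· + ·) (S.glue o fl fr) g =
        S.glue o (map2 (· + ·) fl (splitL g o)) (map2 (· + ·) fr (splitR g o)) := rfl
    rw [this, fa_glue, fa_glue, ← ihl, ← ihr, fa_split g o]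
    ring
end

section
/- (Uniform continuity of integration on step functions) For all rational step functions f, g : S ℚ, |fold_affine f − fold_affine g| ≤ d¹ f g, where d¹ f g := ‖map2 (·−·) f g‖₁. In particular fold_affine : S ℚ → ℚ is uniformly continuous with modulus the identity for the L¹ metric. -/
set_option linter.unusedVariables false

open S
/-! `foldAffine` is the integral of a step function. Splitting at `a` cuts the integral into the
weighted integrals over `[0,a]` and `[a,1]`; since `ap` splits its argument exactly along the
tree of its left operand, this makes the integral additive: `∫(f - g) = ∫f - ∫g`. The estimate
`|∫h| ≤ ∫|h|` is the triangle inequality at each node, the weights `o` and `1 - o` being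
positive. -/

namespace S

@[simp]
lemma foldAffine_const (x : ℚ) : foldAffine (const x) = x := rfl

@[simp]
lemma foldAffine_glue (o : OO) (f g : S ℚ) :
    foldAffine (glue o f g) = o.1 * foldAffine f + (1 - o.1) * foldAffine g := rfl

lemma foldAffine_eq_split (f : S ℚ) (a : OO) :
    foldAffine f = a.1 * foldAffine (splitL f a) + (1 - a.1) * foldAffine (splitR f a) := by
  induction f generalizing a with
  | const x => simp only [splitL, splitR, foldAffine_const]; ring
  | glue o l r ihl ihr =>
    have ha : (a.1 : ℚ) ≠ 0 := a.2.1.ne'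
    have ho : (o.1 : ℚ) ≠ 0 := o.2.1.ne'
    have ha' : (1 : ℚ) - a.1 ≠ 0 := sub_ne_zero.2 a.2.2.ne'
    have ho' : (1 : ℚ) - o.1 ≠ 0 := sub_ne_zero.2 o.2.2.ne'
    rcases lt_trichotomy a.1 o.1 with hlt | heq | hgt
    · simp only [splitL, splitR, dif_pos hlt, foldAffine_glue, ihl (divO a o hlt), divO, subO]
      field_simp
      ring
    · simp only [splitL, splitR, lt_irrefl, heq, dif_neg, not_false_eq_true, foldAffine_glue]
    · simp only [splitL, splitR, dif_neg hgt.not_gt, dif_pos hgt, foldAffine_glue,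
        ihr (subO a o hgt), divO, subO]
      field_simp
      ring

lemma foldAffine_mapS_const_sub (c : ℚ) (g : S ℚ) :
    foldAffine (mapS (c - ·) g) = c - foldAffine g := by
  induction g with
  | const x => rfl
  | glue o l r ihl ihr =>
    simp only [mapS, foldAffine_glue, ihl, ihr]
    ring

lemma foldAffine_map2_sub (f g : S ℚ) :
    foldAffine (map2 (· - ·) f g) = foldAffine f - foldAffine g := by
  induction f generalizing g with
  | const c => exact foldAffine_mapS_const_sub c g
  | glue o l r ihl ihr =>
    simp only [map2, mapS, ap] at ihl ihr ⊢
    rw [foldAffine_glue, ihl, ihr, foldAffine_glue, foldAffine_eq_split g o]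
    ring

lemma abs_foldAffine_le_normOne (h : S ℚ) : |foldAffine h| ≤ normOne h := by
  induction h with
  | const x => rfl
  | glue o l r ihl ihr =>
    have ho : 0 < o.1 := o.2.1
    have ho' : 0 < 1 - o.1 := sub_pos.2 o.2.2
    calc |o.1 * foldAffine l + (1 - o.1) * foldAffine r|
        ≤ o.1 * |foldAffine l| + (1 - o.1) * |foldAffine r| := by
          refine (abs_add_le _ _).trans_eq ?_
          rw [abs_mul, abs_mul, abs_of_pos ho, abs_of_pos ho']
      _ ≤ o.1 * normOne l + (1 - o.1) * normOne r := by gcongr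
      _ = normOne (glue o l r) := rfl

end S

/-- Integration of step functions is uniformly continuous with modulus the
identity for the L¹ metric. -/
theorem foldAffine_uniformly_continuous (f g : S ℚ) :
    |foldAffine f - foldAffine g| ≤ dOne f g ∧
    ∀ ε : ℚ, dOne f g ≤ ε → |foldAffine f - foldAffine g| ≤ ε := by
  have hle : |foldAffine f - foldAffine g| ≤ dOne f g := by
    rw [← foldAffine_map2_sub]
    exact abs_foldAffine_le_normOne _
  exact ⟨hle, fun _ hε => hle.trans hε⟩
end

section
/- (Uniform continuity of the supremum on step functions) For all rational step functions f, g : S ℚ, |fold_sup f − fold_sup g| ≤ d∞ f g, where d∞ f g := ‖map2 (·−·) f g‖∞. In particular fold_sup : S ℚ → ℚ is uniformly continuous with modulus the identity for the sup metric. -/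
set_option linter.unusedVariables false

open S

lemma mapS_mapS {X Y Z : Type} (g : Y → Z) (f : X → Y) (x : S X) :
    mapS g (mapS f x) = mapS (fun a => g (f a)) x := by
  induction x with
  | const a => rfl
  | glue o l r ihl ihr => simp [mapS, ihl, ihr]

lemma foldSup_glue (o : OO) (a b : S ℚ) :
    foldSup (glue o a b) = max (foldSup a) (foldSup b) := rfl

lemma foldSup_split (f : S ℚ) :
    ∀ a : OO, max (foldSup (splitL f a)) (foldSup (splitR f a)) = foldSup f := by
  induction f with
  | const x => intro a; simp [splitL, splitR, foldSup, fold]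
  | glue o l r ihl ihr =>
    intro a
    by_cases h : a.1 < o.1
    · simp only [splitL, splitR, dif_pos h, foldSup_glue]
      rw [← max_assoc, ihl]
    · by_cases h' : o.1 < a.1
      · simp only [splitL, splitR, dif_neg h, dif_pos h', foldSup_glue]
        rw [max_assoc, ihr]
      · simp only [splitL, splitR, dif_neg h, dif_neg h', foldSup_glue]

lemma const_case (x : ℚ) (g : S ℚ) :
    |x - foldSup g| ≤ foldSup (mapS (fun y => |x - y|) g) := by
  induction g with
  | const y => simp [foldSup, fold, mapS]
  | glue o l r ihl ihr =>
    simp only [mapS, foldSup_glue]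
    calc |x - max (foldSup l) (foldSup r)|
        = |max x x - max (foldSup l) (foldSup r)| := by rw [max_self]
      _ ≤ max |x - foldSup l| |x - foldSup r| := abs_max_sub_max_le_max _ _ _ _
      _ ≤ _ := max_le_max ihl ihr

lemma main_lemma (f : S ℚ) :
    ∀ g : S ℚ, |foldSup f - foldSup g| ≤
      foldSup (mapS (fun q => |q|) (ap (mapS (· - ·) f) g)) := by
  induction f with
  | const x =>
    intro g
    simp only [mapS, ap, mapS_mapS, foldSup, fold]
    exact const_case x g
  | glue o fl fr ihl ihr =>
    intro g
    simp only [mapS, ap, foldSup_glue]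
    calc |max (foldSup fl) (foldSup fr) - foldSup g|
        = |max (foldSup fl) (foldSup fr) -
            max (foldSup (splitL g o)) (foldSup (splitR g o))| := by
          rw [foldSup_split g o]
      _ ≤ max |foldSup fl - foldSup (splitL g o)|
            |foldSup fr - foldSup (splitR g o)| := abs_max_sub_max_le_max _ _ _ _
      _ ≤ _ := max_le_max (ihl _) (ihr _)

/-- The supremum of step functions is uniformly continuous with modulus the
identity for the sup metric. -/
theorem foldSup_uniformly_continuous (f g : S ℚ) :
    |foldSup f - foldSup g| ≤ dInf f g ∧
    ∀ ε : ℚ, dInf f g ≤ ε → |foldSup f - foldSup g| ≤ ε := by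

  have h : |foldSup f - foldSup g| ≤ dInf f g := main_lemma f g
  exact ⟨h, fun ε hε => le_trans h hε⟩
end

section
/- (Lifting universal statements to step functions) Let X, Y, Z be types and R : X → Y → Z → Prop a ternary relation. If R x y z holds for all x : X, y : Y, z : Z, then for all step functions f : S X, g : S Y, h : S Z, fold⋆ (map R f @ g @ h) holds. -/
set_option linter.unusedVariables false

open S

def AllS {X : Type} (P : X → Prop) : S X → Prop
  | .const x => P x
  | .glue _ f g => AllS P f ∧ AllS P g

lemma allS_splitL {X : Type} (P : X → Prop) :
    ∀ (f : S X) (a : OO), AllS P f → AllS P (splitL f a)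
  | .const x, a, h => h
  | .glue o l r, a, h => by
    unfold splitL
    split
    · exact allS_splitL P l _ h.1
    · split
      · exact ⟨h.1, allS_splitL P r _ h.2⟩
      · exact h.1

lemma allS_splitR {X : Type} (P : X → Prop) :
    ∀ (f : S X) (a : OO), AllS P f → AllS P (splitR f a)
  | .const x, a, h => h
  | .glue o l r, a, h => by
    unfold splitR
    split
    · exact ⟨allS_splitR P l _ h.1, h.2⟩
    · split
      · exact allS_splitR P r _ h.2
      · exact h.2

lemma allS_mapS {X Y : Type} (P : Y → Prop) (g : X → Y) (hg : ∀ x, P (g x)) :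
    ∀ (s : S X), AllS P (mapS g s)
  | .const x => hg x
  | .glue o l r => ⟨allS_mapS P g hg l, allS_mapS P g hg r⟩

lemma allS_ap {X Y : Type} (P : Y → Prop) :
    ∀ (f : S (X → Y)), AllS (fun g => ∀ a, P (g a)) f → ∀ (x : S X), AllS P (ap f x)
  | .const g, h, x => allS_mapS P g h x
  | .glue o l r, h, x =>
    ⟨allS_ap P l h.1 _, allS_ap P r h.2 _⟩

lemma foldStar_of_allS : ∀ (s : S Prop), AllS id s → foldStar s
  | .const p, h => h
  | .glue o l r, h => ⟨foldStar_of_allS l h.1, foldStar_of_allS r h.2⟩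

/-- Universal statements about a ternary relation lift to step functions. -/
theorem lift_forall_step {X Y Z : Type} (R : X → Y → Z → Prop)
    (hR : ∀ (x : X) (y : Y) (z : Z), R x y z) :
    ∀ (f : S X) (g : S Y) (h : S Z), foldStar (ap (ap (mapS R f) g) h) := by
  intro f g h
  apply foldStar_of_allS
  apply allS_ap
  apply allS_ap
  apply allS_mapS
  exact hR
end

section
/- (Implication distributes over fold⋆) For all step functions of propositions P, Q : S Prop, if fold⋆ (map2 (fun p q => p → q) P Q) holds and fold⋆ P holds, then fold⋆ Q holds. -/
set_option linter.unusedVariables false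

open S

lemma foldStar_split (x : S Prop) : ∀ a : OO,
    foldStar (splitL x a) → foldStar (splitR x a) → foldStar x := by
  induction x with
  | const p => intro a h _; exact h
  | glue o f g ihf ihg =>
      intro a hl hr
      simp only [splitL, splitR] at hl hr
      split_ifs at hl hr with h h'
      · obtain ⟨hr1, hr2⟩ := hr
        exact ⟨ihf _ hl hr1, hr2⟩
      · obtain ⟨hl1, hl2⟩ := hl
        exact ⟨hl1, ihg _ hl2 hr⟩
      · exact ⟨hl, hr⟩

lemma foldStar_mapS (p : Prop) (hp : p) (Q : S Prop) :
    foldStar (mapS (fun q : Prop => p → q) Q) → foldStar Q := by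
  induction Q with
  | const q => intro h; exact h hp
  | glue o l r ihl ihr => intro ⟨h1, h2⟩; exact ⟨ihl h1, ihr h2⟩

/-- Implication distributes over `fold⋆`. -/
theorem foldStar_imp (P Q : S Prop) :
    foldStar (map2 (fun p q : Prop => p → q) P Q) → foldStar P → foldStar Q := by
  induction P generalizing Q with
  | const p =>
      intro h hp
      exact foldStar_mapS p hp Q h
  | glue o l r ihl ihr =>
      intro ⟨h1, h2⟩ ⟨hl, hr⟩
      exact foldStar_split Q o (ihl _ h1 hl) (ihr _ h2 hr)
end

section
/- (Correctness of the Riemann integral via midpoint sampling) Let f : ℝ → ℝ be continuous on the closed interval [0,1]. Then the midpoint Riemann sums converge to the integral: the sequence n ↦ (1/n) · ∑_{i=0}^{n−1} f((2i+1)/(2n)) tends to ∫ x in 0..1, f x as n → ∞. -/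
/-!
On the `i`-th piece of the uniform partition of `[a, b]` into `n` intervals, every point lies
within the mesh `(b - a) / n` of the tag, so by uniform continuity of `f` on `[a, b]` the
integrand differs from its value at the tag by at most `ε` once `n` is large. Summing over the
pieces, the Riemann sum is then within `ε * (b - a)` of the integral.
-/

open Set Filter Topology MeasureTheory

noncomputable def uniformNode (a b : ℝ) (n i : ℕ) : ℝ := a + i * ((b - a) / n)

section UniformNode

variable {a b : ℝ} {n : ℕ}

lemma uniformNode_succ_sub (i : ℕ) :
    uniformNode a b n (i + 1) - uniformNode a b n i = (b - a) / n := by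
  simp only [uniformNode]; push_cast; ring

lemma uniformNode_zero : uniformNode a b n 0 = a := by simp [uniformNode]

lemma uniformNode_self (hn : n ≠ 0) : uniformNode a b n n = b := by
  simp [uniformNode, mul_div_cancel₀ (b - a) (Nat.cast_ne_zero.mpr hn : (n : ℝ) ≠ 0)]

lemma uniformNode_mono (hab : a ≤ b) : Monotone (uniformNode a b n) := fun i j hij => by
  unfold uniformNode; gcongr

lemma Icc_uniformNode_subset (hab : a ≤ b) (hn : n ≠ 0) {i : ℕ} (hi : i < n) :
    Icc (uniformNode a b n i) (uniformNode a b n (i + 1)) ⊆ Icc a b := by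
  have h := Icc_subset_Icc (uniformNode_mono (n := n) hab (Nat.zero_le i))
    (uniformNode_mono (n := n) hab hi)
  rwa [uniformNode_zero, uniformNode_self hn] at h

end UniformNode

lemma abs_integral_sub_mul_le {f : ℝ → ℝ} {a b c ε : ℝ} (hab : a ≤ b)
    (hf : IntervalIntegrable f volume a b) (h : ∀ x ∈ Icc a b, |f x - c| ≤ ε) :
    |(∫ x in a..b, f x) - (b - a) * c| ≤ ε * (b - a) := by
  have hsub : (∫ x in a..b, f x) - (b - a) * c = ∫ x in a..b, (f x - c) := by
    simp [intervalIntegral.integral_sub hf intervalIntegrable_const]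
  rw [hsub, ← abs_of_nonneg (sub_nonneg.2 hab), ← Real.norm_eq_abs]
  exact intervalIntegral.norm_integral_le_of_norm_le_const fun x hx =>
    h x (Ioc_subset_Icc_self (uIoc_of_le hab ▸ hx))

lemma abs_riemannSum_sub_integral_le {f : ℝ → ℝ} {a b ε : ℝ} {n : ℕ} (hab : a ≤ b) (hn : n ≠ 0)
    (hf : IntervalIntegrable f volume a b) (t : ℕ → ℝ)
    (h : ∀ i < n, ∀ x ∈ Icc (uniformNode a b n i) (uniformNode a b n (i + 1)),
      |f x - f (t i)| ≤ ε) :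
    |(b - a) / n * ∑ i ∈ Finset.range n, f (t i) - ∫ x in a..b, f x| ≤ ε * (b - a) := by
  have hle (i : ℕ) : uniformNode a b n i ≤ uniformNode a b n (i + 1) :=
    uniformNode_mono hab i.le_succ
  have hint : ∀ i < n, IntervalIntegrable f volume (uniformNode a b n i)
      (uniformNode a b n (i + 1)) := fun i hi => hf.mono_set <| by
    rw [uIcc_of_le (hle i), uIcc_of_le hab]
    exact Icc_uniformNode_subset hab hn hi
  have hsplit : ∫ x in a..b, f x = ∑ i ∈ Finset.range n,
      ∫ x in uniformNode a b n i..uniformNode a b n (i + 1), f x := by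
    rw [intervalIntegral.sum_integral_adjacent_intervals hint, uniformNode_zero,
      uniformNode_self hn]
  calc |(b - a) / n * ∑ i ∈ Finset.range n, f (t i) - ∫ x in a..b, f x|
      = |∑ i ∈ Finset.range n, ((∫ x in uniformNode a b n i..uniformNode a b n (i + 1), f x)
          - (uniformNode a b n (i + 1) - uniformNode a b n i) * f (t i))| := by
        rw [hsplit, abs_sub_comm, Finset.mul_sum, ← Finset.sum_sub_distrib]
        simp only [uniformNode_succ_sub]
    _ ≤ ∑ i ∈ Finset.range n, |(∫ x in uniformNode a b n i..uniformNode a b n (i + 1), f x)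
          - (uniformNode a b n (i + 1) - uniformNode a b n i) * f (t i)| :=
        Finset.abs_sum_le_sum_abs _ _
    _ ≤ ∑ i ∈ Finset.range n, ε * (uniformNode a b n (i + 1) - uniformNode a b n i) :=
        Finset.sum_le_sum fun i hi =>
          abs_integral_sub_mul_le (hle i) (hint i (Finset.mem_range.1 hi))
            (h i (Finset.mem_range.1 hi))
    _ = ε * (b - a) := by
        simp only [uniformNode_succ_sub, Finset.sum_const, Finset.card_range, nsmul_eq_mul]
        field_simp

theorem tendsto_riemannSum_uniformNode {f : ℝ → ℝ} {a b : ℝ} (hab : a ≤ b)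
    (hf : ContinuousOn f (Icc a b)) (t : ℕ → ℕ → ℝ)
    (ht : ∀ n, ∀ i < n, t n i ∈ Icc (uniformNode a b n i) (uniformNode a b n (i + 1))) :
    Tendsto (fun n : ℕ => (b - a) / n * ∑ i ∈ Finset.range n, f (t n i)) atTop
      (𝓝 (∫ x in a..b, f x)) := by
  rw [Metric.tendsto_atTop]
  intro ε hε
  obtain ⟨δ, hδ, hfδ⟩ := Metric.uniformContinuousOn_iff_le.1
    (isCompact_Icc.uniformContinuousOn_of_continuous hf) (ε / (b - a + 1)) (by positivity)
  obtain ⟨N, hN⟩ := exists_nat_gt ((b - a) / δ)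
  refine ⟨N, fun n hNn => ?_⟩
  have hn₀ : 0 < (n : ℝ) :=
    (div_nonneg (sub_nonneg.2 hab) hδ.le).trans_lt (hN.trans_le (Nat.cast_le.2 hNn))
  have hn : n ≠ 0 := (Nat.cast_pos.1 hn₀).ne'
  have hmesh : (b - a) / n ≤ δ := by
    rw [div_le_iff₀ hn₀, ← div_le_iff₀' hδ]
    exact hN.le.trans (Nat.cast_le.2 hNn)
  have hclose : ∀ i < n, ∀ x ∈ Icc (uniformNode a b n i) (uniformNode a b n (i + 1)),
      |f x - f (t n i)| ≤ ε / (b - a + 1) := fun i hi x hx => by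
    have hpiece := Icc_uniformNode_subset hab hn hi
    rw [← Real.dist_eq]
    refine hfδ x (hpiece hx) (t n i) (hpiece (ht n i hi)) ?_
    calc dist x (t n i) ≤ _ := Real.dist_le_of_mem_Icc hx (ht n i hi)
      _ ≤ δ := (uniformNode_succ_sub i).trans_le hmesh
  rw [Real.dist_eq]
  calc _ ≤ ε / (b - a + 1) * (b - a) :=
        abs_riemannSum_sub_integral_le hab hn (hf.intervalIntegrable_of_Icc hab) (t n) hclose
    _ < ε := by
        rw [div_mul_eq_mul_div, div_lt_iff₀ (by linarith)]
        nlinarith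

theorem tendsto_midpoint_riemannSum {f : ℝ → ℝ} {a b : ℝ} (hab : a ≤ b)
    (hf : ContinuousOn f (Icc a b)) :
    Tendsto (fun n : ℕ => (b - a) / n * ∑ i ∈ Finset.range n,
        f ((uniformNode a b n i + uniformNode a b n (i + 1)) / 2)) atTop
      (𝓝 (∫ x in a..b, f x)) :=
  tendsto_riemannSum_uniformNode hab hf _ fun n i _ => by
    have := uniformNode_mono (n := n) hab i.le_succ
    constructor <;> linarith

lemma uniformNode_zero_one_midpoint (n i : ℕ) :
    (uniformNode 0 1 n i + uniformNode 0 1 n (i + 1)) / 2 = (2 * i + 1) / (2 * n) := by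
  simp only [uniformNode]
  push_cast
  ring

/-- For a function continuous on `[0,1]`, the midpoint Riemann sums converge to
the integral over `[0,1]`. -/
theorem midpoint_riemann_sums_tendsto_integral (f : ℝ → ℝ)
    (hf : ContinuousOn f (Set.Icc 0 1)) :
    Filter.Tendsto
      (fun n : ℕ =>
        (1 / (n : ℝ)) * ∑ i ∈ Finset.range n, f ((2 * (i : ℝ) + 1) / (2 * (n : ℝ))))
      Filter.atTop (nhds (∫ x in (0:ℝ)..1, f x)) := by
  simpa only [uniformNode_zero_one_midpoint, sub_zero] using
    tendsto_midpoint_riemannSum zero_le_one hf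
end
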